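/- arXiv:1712.08661 — 6 statements merged into one kernel-verified Lean document; each statement's English description precedes it below -/
import Mathlib

section
/- The logic CO^neg over parametric recursive causal teams is flat: for every formula φ of CO^neg and every parametric recursive causal team T, T ⊨ φ if and only if {s} ⊨ φ for every assignment s ∈ T⁻, where {s} denotes the causal subteam of T whose team component is the singleton {s}. -/
open scoped Classical

/-- A (pre-)causal team over variables `V` and values `A`: a team of assignments,
a set of endogenous variables, a directed graph (the edge relation), ranges for the
variables, and partial structural functions.  The function `fn Y` is given on full
assignments (it is required, via `IsCausal`, to depend only on the parents of `Y`);
`fn Y s = none` means that the invariant function for `Y` is undefined on the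
parent-values of `s`. -/
structure PreCausalTeam (V A : Type) where
  team : Set (V → A)
  endo : Set V
  edge : V → V → Prop
  ran : V → Set A
  fn : V → (V → A) → Option A

namespace PreCausalTeam

variable {V A : Type}

/-- The defining conditions of a causal team: values lie in the ranges, the structural
functions exist only for endogenous variables, depend only on the parents and take values
in the ranges, the team satisfies the functional dependence of each endogenous variable
on its parents (condition (b)), and the team complies with the structural functions
(condition (c)). -/
def IsCausal (T : PreCausalTeam V A) : Prop :=
  (∀ s ∈ T.team, ∀ X, s X ∈ T.ran X) ∧
  (∀ Y, Y ∉ T.endo → ∀ s, T.fn Y s = none) ∧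
  (∀ Y, ∀ s s' : V → A, (∀ X, T.edge X Y → s X = s' X) → T.fn Y s = T.fn Y s') ∧
  (∀ Y s a, T.fn Y s = some a → a ∈ T.ran Y) ∧
  (∀ s ∈ T.team, ∀ s' ∈ T.team, ∀ Y ∈ T.endo,
    (∀ X, T.edge X Y → s X = s' X) → s Y = s' Y) ∧
  (∀ s ∈ T.team, ∀ Y a, T.fn Y s = some a → s Y = a)

/-- A causal team is parametric if the structural function of each endogenous variable
is defined on every combination of values (from the ranges) for its parents. -/
def Parametric (T : PreCausalTeam V A) : Prop :=
  ∀ Y ∈ T.endo, ∀ s : V → A, (∀ X, T.edge X Y → s X ∈ T.ran X) → (T.fn Y s).isSome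

/-- A causal team is recursive if its graph is acyclic (no directed cycles). -/
def Recursive (T : PreCausalTeam V A) : Prop :=
  ∀ v, ¬ Relation.TransGen T.edge v v

/-- The causal (sub)team obtained by replacing the team component (graph, ranges and
functions are kept). -/
def withTeam (T : PreCausalTeam V A) (S : Set (V → A)) : PreCausalTeam V A :=
  { T with team := S }

/-- The effect of the intervention `do(X = x)` on a single assignment `s` of a
recursive causal team: the variables in `X` are set to the prescribed values, and the
descendants of `X` are updated (in order of evaluation distance) using the structural
functions; variables whose structural function is undefined at the new parent values
keep their old value.  (Defined by well-founded recursion along the acyclic graph.) -/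
noncomputable def doAssign (T : PreCausalTeam V A) (X : Set V) (x : V → A)
    (s : V → A) : V → A :=
  if h : WellFounded T.edge then
    WellFounded.fix (C := fun _ => A) h fun W ih =>
      if W ∈ X then x W
      else (T.fn W fun P => if hp : T.edge P W then ih P hp else s P).getD (s W)
  else s

/-- The intervened causal team `T_{X=x}`: all arrows into `X` are deleted, the variables
of `X` become exogenous (their structural functions are removed), and every assignment
of the team is updated by the intervention algorithm. -/
noncomputable def doTeam (T : PreCausalTeam V A) (X : Set V) (x : V → A) :
    PreCausalTeam V A where
  team := T.doAssign X x '' T.team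
  endo := T.endo \ X
  edge := fun a b => T.edge a b ∧ b ∉ X
  ran := T.ran
  fn := fun W s => if W ∈ X then none else T.fn W s

end PreCausalTeam

/-- Classical formulas: Boolean combinations of atoms `Y = y` and `Y ≠ y`. -/
inductive ClForm (V A : Type) where
  | eq : V → A → ClForm V A
  | neq : V → A → ClForm V A
  | conj : ClForm V A → ClForm V A → ClForm V A
  | disj : ClForm V A → ClForm V A → ClForm V A

/-- Tarskian satisfaction of a classical formula by a single assignment. -/
def ClForm.sat {V A : Type} (s : V → A) : ClForm V A → Prop
  | .eq Y a => s Y = a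
  | .neq Y a => s Y ≠ a
  | .conj φ ψ => ClForm.sat s φ ∧ ClForm.sat s ψ
  | .disj φ ψ => ClForm.sat s φ ∨ ClForm.sat s ψ

/-- Formulas of the language `CO^neg`: atoms `Y = y`, `Y ≠ y`, conjunction, (tensor)
disjunction, dual negation, selective implication with classical antecedent, and
interventionist counterfactual. -/
inductive CONegForm (V A : Type) where
  | eq : V → A → CONegForm V A
  | neq : V → A → CONegForm V A
  | conj : CONegForm V A → CONegForm V A → CONegForm V A
  | disj : CONegForm V A → CONegForm V A → CONegForm V A
  | neg : CONegForm V A → CONegForm V A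
  | selimp : ClForm V A → CONegForm V A → CONegForm V A
  | cf : Set V → (V → A) → CONegForm V A → CONegForm V A

/-- Team satisfaction for `CO^neg` formulas over causal teams. -/
def CONegForm.sat {V A : Type} : CONegForm V A → PreCausalTeam V A → Prop
  | .eq Y a, T => ∀ s ∈ T.team, s Y = a
  | .neq Y a, T => ∀ s ∈ T.team, s Y ≠ a
  | .conj φ ψ, T => CONegForm.sat φ T ∧ CONegForm.sat ψ T
  | .disj φ ψ, T => ∃ S₁ S₂ : Set (V → A), S₁ ∪ S₂ = T.team ∧
      CONegForm.sat φ (T.withTeam S₁) ∧ CONegForm.sat ψ (T.withTeam S₂)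
  | .neg φ, T => ∀ s ∈ T.team, ¬ CONegForm.sat φ (T.withTeam {s})
  | .selimp θ χ, T => CONegForm.sat χ (T.withTeam {s | s ∈ T.team ∧ ClForm.sat s θ})
  | .cf X x χ, T => CONegForm.sat χ (T.doTeam X x)

@[simp] lemma PreCausalTeam.withTeam_team {V A : Type} (T : PreCausalTeam V A)
    (S : Set (V → A)) : (T.withTeam S).team = S := rfl

lemma PreCausalTeam.withTeam_withTeam {V A : Type} (T : PreCausalTeam V A)
    (S S' : Set (V → A)) : (T.withTeam S).withTeam S' = T.withTeam S' := rfl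

lemma PreCausalTeam.doTeam_withTeam {V A : Type} (T : PreCausalTeam V A)
    (S : Set (V → A)) (X : Set V) (x : V → A) :
    (T.withTeam S).doTeam X x = (T.doTeam X x).withTeam (T.doAssign X x '' S) := rfl

theorem CONeg_flat_aux {V A : Type} (φ : CONegForm V A) (T : PreCausalTeam V A) :
    CONegForm.sat φ T ↔ ∀ s ∈ T.team, CONegForm.sat φ (T.withTeam {s}) := by
  induction φ generalizing T with
  | eq Y a => simp [CONegForm.sat, PreCausalTeam.withTeam]
  | neq Y a => simp [CONegForm.sat, PreCausalTeam.withTeam]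
  | conj φ ψ ihφ ihψ =>
      simp only [CONegForm.sat]
      rw [ihφ, ihψ]
      constructor
      · rintro ⟨h1, h2⟩ s hs; exact ⟨h1 s hs, h2 s hs⟩
      · intro h; exact ⟨fun s hs => (h s hs).1, fun s hs => (h s hs).2⟩
  | neg φ ihφ =>
      simp only [CONegForm.sat, PreCausalTeam.withTeam_withTeam]
      constructor
      · intro h s hs t ht
        rcases ht with rfl
        exact h t hs
      · intro h s hs
        exact h s hs s rfl
  | disj φ ψ ihφ ihψ =>
      constructor
      · rintro ⟨S₁, S₂, hU, h1, h2⟩ s hs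
        rw [ihφ] at h1; rw [ihψ] at h2
        rw [← hU] at hs
        rcases hs with hs | hs
        · refine ⟨{s}, ∅, by simp, ?_, ?_⟩
          · rw [ihφ]
            rintro t rfl
            rw [PreCausalTeam.withTeam_withTeam]
            have := h1 t hs
            rwa [PreCausalTeam.withTeam_withTeam] at this
          · rw [ihψ]
            rintro t ht
            exact absurd ht (Set.notMem_empty t)
        · refine ⟨∅, {s}, by simp, ?_, ?_⟩
          · rw [ihφ]
            rintro t ht
            exact absurd ht (Set.notMem_empty t)
          · rw [ihψ]
            rintro t rfl
            rw [PreCausalTeam.withTeam_withTeam]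
            have := h2 t hs
            rwa [PreCausalTeam.withTeam_withTeam] at this
      · intro h
        refine ⟨{s ∈ T.team | CONegForm.sat φ (T.withTeam {s})},
          {s ∈ T.team | CONegForm.sat ψ (T.withTeam {s})}, ?_, ?_, ?_⟩
        · ext s
          simp only [Set.mem_union, Set.mem_setOf_eq]
          constructor
          · rintro (⟨hs, _⟩ | ⟨hs, _⟩) <;> exact hs
          · intro hs
            obtain ⟨S₁, S₂, hU, h1, h2⟩ := h s hs
            have hss : s ∈ S₁ ∪ S₂ := by rw [hU]; exact rfl
            rw [ihφ] at h1; rw [ihψ] at h2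
            rcases hss with hs1 | hs2
            · left; exact ⟨hs, by
                have := h1 s hs1
                rwa [PreCausalTeam.withTeam_withTeam] at this⟩
            · right; exact ⟨hs, by
                have := h2 s hs2
                rwa [PreCausalTeam.withTeam_withTeam] at this⟩
        · rw [ihφ]; rintro s ⟨_, hsφ⟩; rwa [PreCausalTeam.withTeam_withTeam]
        · rw [ihψ]; rintro s ⟨_, hsψ⟩; rwa [PreCausalTeam.withTeam_withTeam]
  | selimp θ χ ihχ =>
      simp only [CONegForm.sat]
      rw [ihχ]
      constructor
      · intro h s hs
        rw [ihχ]
        rintro t ⟨ht, hθ⟩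
        rcases ht with rfl
        rw [PreCausalTeam.withTeam_withTeam]
        exact h t ⟨hs, hθ⟩
      · rintro h s ⟨hs, hθ⟩
        have := (ihχ _).mp (h s hs) s ⟨rfl, hθ⟩
        rwa [PreCausalTeam.withTeam_withTeam] at this
  | cf X x χ ihχ =>
      simp only [CONegForm.sat]
      rw [ihχ]
      constructor
      · intro h s hs
        rw [PreCausalTeam.doTeam_withTeam, ihχ]
        rintro t ⟨u, hu, rfl⟩
        rw [PreCausalTeam.withTeam_withTeam]
        rcases hu with rfl
        exact h _ ⟨u, hs, rfl⟩
      · rintro h t ⟨s, hs, rfl⟩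
        have := h s hs
        rw [PreCausalTeam.doTeam_withTeam, ihχ] at this
        have h2 := this (T.doAssign X x s) ⟨s, rfl, rfl⟩
        rwa [PreCausalTeam.withTeam_withTeam] at h2

/-- The logic `CO^neg` over parametric recursive causal teams is flat:
`T ⊨ φ` iff `{s} ⊨ φ` for every assignment `s` of the team, where `{s}` is the singleton
causal subteam of `T`. -/
theorem CONeg_flat {V A : Type} [Fintype V]
    (φ : CONegForm V A) (T : PreCausalTeam V A)
    (hcau : T.IsCausal) (hpar : T.Parametric) (hrec : T.Recursive) :
    CONegForm.sat φ T ↔ ∀ s ∈ T.team, CONegForm.sat φ (T.withTeam {s}) := by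
  exact CONeg_flat_aux φ T
end

section
/- All formulas of CO^neg satisfy the weak law of excluded middle: for every formula φ of CO^neg and every parametric recursive causal team T, T ⊨ φ ∨ ¬φ. -/
open scoped Classical

namespace PreCausalTeam

@[simp] lemma withTeam_team_s5 {V A : Type} (T : PreCausalTeam V A) (S : Set (V → A)) :
    (T.withTeam S).team = S := rfl

@[simp] lemma withTeam_withTeam_s5 {V A : Type} (T : PreCausalTeam V A)
    (S S' : Set (V → A)) : (T.withTeam S).withTeam S' = T.withTeam S' := rfl

lemma doTeam_withTeam_s5 {V A : Type} (T : PreCausalTeam V A) (S : Set (V → A))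
    (X : Set V) (x : V → A) :
    (T.withTeam S).doTeam X x = (T.doTeam X x).withTeam (T.doAssign X x '' S) := rfl

end PreCausalTeam

/-- Every `CO^neg` formula is satisfied by any causal team with an empty team part. -/
lemma CONeg_sat_empty {V A : Type} (φ : CONegForm V A) :
    ∀ T : PreCausalTeam V A, T.team = ∅ → φ.sat T := by
  induction φ with
  | eq Y a => intro T h s hs; rw [h] at hs; exact absurd hs (Set.notMem_empty s)
  | neq Y a => intro T h s hs; rw [h] at hs; exact absurd hs (Set.notMem_empty s)
  | conj φ ψ ihφ ihψ => intro T h; exact ⟨ihφ T h, ihψ T h⟩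
  | disj φ ψ ihφ ihψ =>
      intro T h
      exact ⟨∅, ∅, by simp [h], ihφ _ rfl, ihψ _ rfl⟩
  | neg φ ih => intro T h s hs; rw [h] at hs; exact absurd hs (Set.notMem_empty s)
  | selimp θ χ ih =>
      intro T h
      apply ih
      show {s | s ∈ T.team ∧ ClForm.sat s θ} = ∅
      ext s; simp [h]
  | cf X x χ ih =>
      intro T h
      apply ih
      show T.doAssign X x '' T.team = ∅
      rw [h]; simp

/-- Flatness of `CO^neg`: a team satisfies a formula iff each of its singleton
subteams does. -/
lemma CONeg_sat_flat {V A : Type} (φ : CONegForm V A) :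
    ∀ T : PreCausalTeam V A, φ.sat T ↔ ∀ s ∈ T.team, φ.sat (T.withTeam {s}) := by
  induction φ with
  | eq Y a =>
      intro T
      constructor
      · intro h s hs t ht
        rcases ht with rfl
        exact h t hs
      · intro h s hs
        exact h s hs s rfl
  | neq Y a =>
      intro T
      constructor
      · intro h s hs t ht
        rcases ht with rfl
        exact h t hs
      · intro h s hs
        exact h s hs s rfl
  | conj φ ψ ihφ ihψ =>
      intro T
      constructor
      · rintro ⟨h₁, h₂⟩ s hs
        exact ⟨(ihφ T).mp h₁ s hs, (ihψ T).mp h₂ s hs⟩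
      · intro h
        exact ⟨(ihφ T).mpr fun s hs => (h s hs).1, (ihψ T).mpr fun s hs => (h s hs).2⟩
  | disj φ ψ ihφ ihψ =>
      intro T
      constructor
      · rintro ⟨S₁, S₂, hu, h₁, h₂⟩ s hs
        have hs' : s ∈ S₁ ∪ S₂ := by rw [hu]; exact hs
        rcases hs' with hs1 | hs2
        · refine ⟨{s}, ∅, by simp, ?_, CONeg_sat_empty ψ _ rfl⟩
          exact (ihφ (T.withTeam S₁)).mp h₁ s hs1
        · refine ⟨∅, {s}, by simp, CONeg_sat_empty φ _ rfl, ?_⟩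
          exact (ihψ (T.withTeam S₂)).mp h₂ s hs2
      · intro h
        refine ⟨{s | s ∈ T.team ∧ φ.sat (T.withTeam {s})},
          {s | s ∈ T.team ∧ ψ.sat (T.withTeam {s})}, ?_, ?_, ?_⟩
        · ext s
          simp only [Set.mem_union, Set.mem_setOf_eq]
          constructor
          · rintro (⟨hs, _⟩ | ⟨hs, _⟩) <;> exact hs
          · intro hs
            obtain ⟨A, B, hu, hA, hB⟩ := h s hs
            have hu' : A ∪ B = {s} := hu
            have hsab : s ∈ A ∪ B := by rw [hu']; rfl
            rcases hsab with hsA | hsB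
            · left
              refine ⟨hs, ?_⟩
              have hA' : A = {s} := by
                apply Set.Subset.antisymm
                · intro t ht; rw [← hu']; exact Or.inl ht
                · intro t ht; rcases ht with rfl; exact hsA
              have : φ.sat (T.withTeam A) := hA
              rwa [hA'] at this
            · right
              refine ⟨hs, ?_⟩
              have hB' : B = {s} := by
                apply Set.Subset.antisymm
                · intro t ht; rw [← hu']; exact Or.inr ht
                · intro t ht; rcases ht with rfl; exact hsB
              have : ψ.sat (T.withTeam B) := hB
              rwa [hB'] at this
        · exact (ihφ _).mpr fun s hs => hs.2
        · exact (ihψ _).mpr fun s hs => hs.2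
  | neg φ ih =>
      intro T
      constructor
      · intro h s hs t ht
        rcases ht with rfl
        exact h t hs
      · intro h s hs
        exact h s hs s rfl
  | selimp θ χ ih =>
      intro T
      constructor
      · intro h s hs
        show χ.sat _
        have h' := (ih _).mp h
        apply (ih _).mpr
        rintro t ⟨ht, hθ⟩
        rcases ht with rfl
        exact h' t ⟨hs, hθ⟩
      · intro h
        show χ.sat _
        apply (ih _).mpr
        rintro s ⟨hs, hθ⟩
        have h' := (ih _).mp (h s hs)
        exact h' s ⟨rfl, hθ⟩
  | cf X x χ ih =>
      intro T
      constructor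
      · intro h s hs
        show χ.sat _
        rw [PreCausalTeam.doTeam_withTeam_s5, Set.image_singleton]
        exact (ih _).mp h (T.doAssign X x s) ⟨s, hs, rfl⟩
      · intro h
        show χ.sat _
        apply (ih _).mpr
        rintro t ⟨s, hs, rfl⟩
        have h'' : χ.sat ((T.withTeam {s}).doTeam X x) := h s hs
        rw [PreCausalTeam.doTeam_withTeam_s5, Set.image_singleton] at h''
        exact h''

/-- All formulas of `CO^neg` satisfy the weak law of excluded middle:
for every formula `φ` of `CO^neg` and every parametric recursive causal team `T`,
`T ⊨ φ ∨ ¬φ`. -/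
theorem CONeg_weak_excluded_middle {V A : Type} [Fintype V]
    (φ : CONegForm V A) (T : PreCausalTeam V A)
    (hcau : T.IsCausal) (hpar : T.Parametric) (hrec : T.Recursive) :
    CONegForm.sat (CONegForm.disj φ (CONegForm.neg φ)) T := by
  refine ⟨{s | s ∈ T.team ∧ φ.sat (T.withTeam {s})},
    {s | s ∈ T.team ∧ ¬ φ.sat (T.withTeam {s})}, ?_, ?_, ?_⟩
  · ext s
    simp only [Set.mem_union, Set.mem_setOf_eq]
    constructor
    · rintro (⟨hs, _⟩ | ⟨hs, _⟩) <;> exact hs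
    · intro hs
      by_cases hφ : φ.sat (T.withTeam {s})
      · exact Or.inl ⟨hs, hφ⟩
      · exact Or.inr ⟨hs, hφ⟩
  · exact (CONeg_sat_flat φ _).mpr fun s hs => hs.2
  · intro s hs
    exact hs.2
end

section
/- Import-export of antecedents (disjoint case): let T be a causal team with G(T) finite and acyclic, X and Y disjoint sets of variables in dom(T), x ∈ Ran(X) and y ∈ Ran(Y). Then T_{X=x ∧ Y=y} = (T_{X=x})_{Y=y}. Consequently, for every formula χ, T ⊨ X=x □→ (Y=y □→ χ) if and only if T ⊨ (X=x ∧ Y=y) □→ χ. -/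
open scoped Classical

/-- Formulas of the language `CD`: atoms `Y = y`, `Y ≠ y`, dependence atoms `=(X; Y)`,
conjunction, (tensor) disjunction, selective implication `θ ⊃ χ` (with classical
antecedent) and interventionist counterfactual `X = x □→ χ`. -/
inductive CDForm (V A : Type) where
  | eq : V → A → CDForm V A
  | neq : V → A → CDForm V A
  | dep : Set V → V → CDForm V A
  | conj : CDForm V A → CDForm V A → CDForm V A
  | disj : CDForm V A → CDForm V A → CDForm V A
  | selimp : ClForm V A → CDForm V A → CDForm V A
  | cf : Set V → (V → A) → CDForm V A → CDForm V A

/-- Team satisfaction for `CD` formulas over causal teams. -/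
def CDForm.sat {V A : Type} : CDForm V A → PreCausalTeam V A → Prop
  | .eq Y a, T => ∀ s ∈ T.team, s Y = a
  | .neq Y a, T => ∀ s ∈ T.team, s Y ≠ a
  | .dep Xs Y, T => ∀ s ∈ T.team, ∀ s' ∈ T.team,
      (∀ X ∈ Xs, s X = s' X) → s Y = s' Y
  | .conj φ ψ, T => CDForm.sat φ T ∧ CDForm.sat ψ T
  | .disj φ ψ, T => ∃ S₁ S₂ : Set (V → A), S₁ ∪ S₂ = T.team ∧
      CDForm.sat φ (T.withTeam S₁) ∧ CDForm.sat ψ (T.withTeam S₂)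
  | .selimp θ χ, T => CDForm.sat χ (T.withTeam {s | s ∈ T.team ∧ ClForm.sat s θ})
  | .cf X x χ, T => CDForm.sat χ (T.doTeam X x)


namespace PreCausalTeam

lemma doAssign_eq {V A : Type} (T : PreCausalTeam V A)
    (h : WellFounded T.edge) (X : Set V) (x s : V → A) (W : V) :
    T.doAssign X x s W =
      if W ∈ X then x W
      else (T.fn W fun P => if T.edge P W then T.doAssign X x s P else s P).getD (s W) := by
  conv_lhs => unfold doAssign
  rw [dif_pos h, WellFounded.fix_eq]
  unfold doAssign
  simp only [dif_pos h, dite_eq_ite]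

lemma doAssign_mem_ran {V A : Type} (T : PreCausalTeam V A) (hcau : T.IsCausal)
    (h : WellFounded T.edge) (X : Set V) (x : V → A) (hx : ∀ v ∈ X, x v ∈ T.ran v)
    (s : V → A) (hs : ∀ v, s v ∈ T.ran v) (W : V) :
    T.doAssign X x s W ∈ T.ran W := by
  rw [T.doAssign_eq h]
  split
  · exact hx W ‹_›
  · cases hfn : T.fn W (fun P => if T.edge P W then T.doAssign X x s P else s P) with
    | none => simpa using hs W
    | some a => simpa using hcau.2.2.2.1 W _ a hfn

lemma key {V A : Type} (T : PreCausalTeam V A) (hcau : T.IsCausal) (hpar : T.Parametric)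
    (hwf : WellFounded T.edge) (X Y : Set V) (x y : V → A) (hdisj : Disjoint X Y)
    (hx : ∀ v ∈ X, x v ∈ T.ran v) (hy : ∀ v ∈ Y, y v ∈ T.ran v)
    (s : V → A) (hs : ∀ v, s v ∈ T.ran v) (W : V) :
    (T.doTeam X x).doAssign Y y (T.doAssign X x s) W
      = T.doAssign (X ∪ Y) (fun v => if v ∈ X then x v else y v) s W := by
  set z : V → A := fun v => if v ∈ X then x v else y v with hz
  have hz' : ∀ v ∈ X ∪ Y, z v ∈ T.ran v := by
    intro v hv
    by_cases hvX : v ∈ X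
    · simpa [hz, hvX] using hx v hvX
    · have hvY : v ∈ Y := hv.resolve_left hvX
      simpa [hz, hvX] using hy v hvY
  have hwf1 : WellFounded (T.doTeam X x).edge :=
    Subrelation.wf (fun {a b} h => h.1) hwf
  induction W using hwf.induction with
  | _ W ih =>
  rw [(T.doTeam X x).doAssign_eq hwf1 Y y (T.doAssign X x s) W, T.doAssign_eq hwf (X ∪ Y) z s W]
  by_cases hWY : W ∈ Y
  · have hWX : W ∉ X := fun h => hdisj.ne_of_mem h hWY rfl
    simp [hWY, hz, hWX]
  by_cases hWX : W ∈ X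
  · rw [if_neg hWY, if_pos (Set.mem_union_left _ hWX)]
    have : (T.doTeam X x).fn W
        (fun P => if (T.doTeam X x).edge P W then
          (T.doTeam X x).doAssign Y y (T.doAssign X x s) P else T.doAssign X x s P) = none := by
      simp [doTeam, hWX]
    rw [this]
    simp only [Option.getD_none]
    rw [T.doAssign_eq hwf X x s W, if_pos hWX]
    simp [hz, hWX]
  · -- W ∉ X, W ∉ Y
    rw [if_neg hWY, if_neg (by simp [hWX, hWY])]
    have hfn1 : ∀ t, (T.doTeam X x).fn W t = T.fn W t := by
      intro t; simp [doTeam, hWX]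
    set p1 : V → A := fun P => if (T.doTeam X x).edge P W then
      (T.doTeam X x).doAssign Y y (T.doAssign X x s) P else T.doAssign X x s P with hp1
    set p2 : V → A := fun P => if T.edge P W then T.doAssign (X ∪ Y) z s P else s P with hp2
    have hedge : ∀ P, (T.doTeam X x).edge P W ↔ T.edge P W := by
      intro P; simp [doTeam, hWX]
    have hfneq : T.fn W p1 = T.fn W p2 := by
      apply hcau.2.2.1
      intro P hPW
      have hPW' : (T.doTeam X x).edge P W := (hedge P).mpr hPW
      simp only [hp1, hp2, if_pos hPW, if_pos hPW']
      exact ih P hPW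
    rw [hfn1, hfneq]
    cases hval : T.fn W p2 with
    | some a => simp
    | none =>
      -- W is not endogenous (else parametricity gives some)
      have hWendo : W ∉ T.endo := by
        intro hWe
        have : (T.fn W p2).isSome := by
          apply hpar W hWe
          intro P hPW
          simp only [hp2, if_pos hPW]
          exact T.doAssign_mem_ran hcau hwf (X ∪ Y) z hz' s hs P
        rw [hval] at this
        simp at this
      simp only [Option.getD_none]
      rw [T.doAssign_eq hwf X x s W, if_neg hWX, hcau.2.1 W hWendo, Option.getD_none]

end PreCausalTeam

/-- Import-export of antecedents (disjoint case): for a (parametric,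
recursive) causal team `T` with finite acyclic graph, disjoint sets of variables `X, Y`
and values `x ∈ Ran(X)`, `y ∈ Ran(Y)`, one has `T_{X=x ∧ Y=y} = (T_{X=x})_{Y=y}`;
consequently, for every formula `χ`,
`T ⊨ X=x □→ (Y=y □→ χ)` iff `T ⊨ (X=x ∧ Y=y) □→ χ`. -/
theorem import_export_disjoint {V A : Type} [Fintype V]
    (T : PreCausalTeam V A)
    (hcau : T.IsCausal) (hpar : T.Parametric) (hrec : T.Recursive)
    (X Y : Set V) (x y : V → A) (hdisj : Disjoint X Y)
    (hx : ∀ v ∈ X, x v ∈ T.ran v) (hy : ∀ v ∈ Y, y v ∈ T.ran v) :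
    T.doTeam (X ∪ Y) (fun v => if v ∈ X then x v else y v) =
      (T.doTeam X x).doTeam Y y ∧
    ∀ χ : CDForm V A,
      CDForm.sat (CDForm.cf X x (CDForm.cf Y y χ)) T ↔
      CDForm.sat (CDForm.cf (X ∪ Y) (fun v => if v ∈ X then x v else y v) χ) T := by
  have htg : WellFounded (Relation.TransGen T.edge) := by
    haveI : IsTrans V (Relation.TransGen T.edge) := ⟨fun _ _ _ => Relation.TransGen.trans⟩
    haveI : IsIrrefl V (Relation.TransGen T.edge) := ⟨hrec⟩
    exact Finite.wellFounded_of_trans_of_irrefl _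
  have hwf : WellFounded T.edge :=
    Subrelation.wf (fun {a b} h => Relation.TransGen.single h) htg
  set z : V → A := fun v => if v ∈ X then x v else y v with hz
  have heq : T.doTeam (X ∪ Y) z = (T.doTeam X x).doTeam Y y := by
    have hteam : (T.doTeam (X ∪ Y) z).team = ((T.doTeam X x).doTeam Y y).team := by
      simp only [PreCausalTeam.doTeam, Set.image_image]
      apply Set.image_congr
      intro s hs
      funext W
      exact (PreCausalTeam.key T hcau hpar hwf X Y x y hdisj hx hy s
        (fun v => hcau.1 s hs v) W).symm
    have hendo : (T.doTeam (X ∪ Y) z).endo = ((T.doTeam X x).doTeam Y y).endo := by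
      simp [PreCausalTeam.doTeam, Set.diff_diff]
    have hedge : (T.doTeam (X ∪ Y) z).edge = ((T.doTeam X x).doTeam Y y).edge := by
      funext a b
      simp only [PreCausalTeam.doTeam, Set.mem_union]
      apply propext
      tauto
    have hfn : (T.doTeam (X ∪ Y) z).fn = ((T.doTeam X x).doTeam Y y).fn := by
      funext W t
      by_cases hWX : W ∈ X <;> by_cases hWY : W ∈ Y <;>
        simp [PreCausalTeam.doTeam, hWX, hWY]
    cases h1 : T.doTeam (X ∪ Y) z with
    | mk t1 e1 g1 r1 f1 =>
      cases h2 : (T.doTeam X x).doTeam Y y with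
      | mk t2 e2 g2 r2 f2 =>
        rw [h1, h2] at hteam hendo hedge hfn
        have hran : r1 = r2 := by
          have : (T.doTeam (X ∪ Y) z).ran = ((T.doTeam X x).doTeam Y y).ran := by
            simp [PreCausalTeam.doTeam]
          rw [h1, h2] at this; exact this
        simp_all
  refine ⟨heq, fun χ => ?_⟩
  simp only [CDForm.sat]
  rw [heq]
end

section
/- Permutation of antecedents (disjoint case): let T be a causal team with G(T) finite and acyclic, X and Y disjoint sets of variables in dom(T), x ∈ Ran(X) and y ∈ Ran(Y). Then (T_{X=x})_{Y=y} = (T_{Y=y})_{X=x}. Consequently, for every formula χ, T ⊨ X=x □→ (Y=y □→ χ) if and only if T ⊨ Y=y □→ (X=x □→ χ). -/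
open scoped Classical

namespace PreCausalTeam

theorem doAssign_spec {V A : Type} (T : PreCausalTeam V A) (hwf : WellFounded T.edge)
    (hdep : ∀ W (s s' : V → A), (∀ P, T.edge P W → s P = s' P) → T.fn W s = T.fn W s')
    (X : Set V) (x s : V → A) (W : V) :
    T.doAssign X x s W =
      if W ∈ X then x W else (T.fn W (T.doAssign X x s)).getD (s W) := by
  conv_lhs => unfold PreCausalTeam.doAssign
  rw [dif_pos hwf, WellFounded.fix_eq]
  by_cases hW : W ∈ X
  · simp [hW]
  · simp only [hW, if_false]
    congr 1
    have : T.doAssign X x s = WellFounded.fix (C := fun _ => A) hwf fun W ih =>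
      if W ∈ X then x W
      else (T.fn W fun P => if hp : T.edge P W then ih P hp else s P).getD (s W) := by
      funext v; unfold PreCausalTeam.doAssign; rw [dif_pos hwf]
    rw [this]
    apply hdep
    intro P hp
    simp [hp]

end PreCausalTeam

/-- Permutation of antecedents (disjoint case): for a (parametric,
recursive) causal team `T` with finite acyclic graph, disjoint sets of variables `X, Y`
and values `x ∈ Ran(X)`, `y ∈ Ran(Y)`, one has `(T_{X=x})_{Y=y} = (T_{Y=y})_{X=x}`;
consequently, for every formula `χ`,
`T ⊨ X=x □→ (Y=y □→ χ)` iff `T ⊨ Y=y □→ (X=x □→ χ)`. -/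
theorem permutation_disjoint {V A : Type} [Fintype V]
    (T : PreCausalTeam V A)
    (hcau : T.IsCausal) (hpar : T.Parametric) (hrec : T.Recursive)
    (X Y : Set V) (x y : V → A) (hdisj : Disjoint X Y)
    (hx : ∀ v ∈ X, x v ∈ T.ran v) (hy : ∀ v ∈ Y, y v ∈ T.ran v) :
    (T.doTeam X x).doTeam Y y = (T.doTeam Y y).doTeam X x ∧
    ∀ χ : CDForm V A,
      CDForm.sat (CDForm.cf X x (CDForm.cf Y y χ)) T ↔
      CDForm.sat (CDForm.cf Y y (CDForm.cf X x χ)) T := by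
  obtain ⟨h1, h2, h3, h4, h5, h6⟩ := hcau
  have hwf : WellFounded T.edge := by
    have hirr : IsIrrefl V (Relation.TransGen T.edge) := ⟨hrec⟩
    have h := Finite.wellFounded_of_trans_of_irrefl (Relation.TransGen T.edge)
    exact Subrelation.wf (fun {a b} h => Relation.TransGen.single h) h
  have hwf1 : WellFounded (T.doTeam X x).edge :=
    Subrelation.wf (fun {a b} h => h.1) hwf
  have hwf2 : WellFounded (T.doTeam Y y).edge :=
    Subrelation.wf (fun {a b} h => h.1) hwf
  have hdep1 : ∀ W (s s' : V → A), (∀ P, (T.doTeam X x).edge P W → s P = s' P) →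
      (T.doTeam X x).fn W s = (T.doTeam X x).fn W s' := by
    intro W s s' h
    show (if W ∈ X then none else T.fn W s) = (if W ∈ X then none else T.fn W s')
    by_cases hW : W ∈ X
    · simp [hW]
    · simp only [hW, if_false]
      exact h3 W s s' fun P hp => h P ⟨hp, hW⟩
  have hdep2 : ∀ W (s s' : V → A), (∀ P, (T.doTeam Y y).edge P W → s P = s' P) →
      (T.doTeam Y y).fn W s = (T.doTeam Y y).fn W s' := by
    intro W s s' h
    show (if W ∈ Y then none else T.fn W s) = (if W ∈ Y then none else T.fn W s')
    by_cases hW : W ∈ Y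
    · simp [hW]
    · simp only [hW, if_false]
      exact h3 W s s' fun P hp => h P ⟨hp, hW⟩
  -- the key pointwise lemma
  have key : ∀ s ∈ T.team, ∀ W,
      (T.doTeam X x).doAssign Y y (T.doAssign X x s) W =
        (T.doTeam Y y).doAssign X x (T.doAssign Y y s) W ∧
      (T.doTeam X x).doAssign Y y (T.doAssign X x s) W ∈ T.ran W := by
    intro s hs
    intro W
    induction W using WellFounded.induction hwf with
    | _ W IH =>
    have e1 := PreCausalTeam.doAssign_spec (T.doTeam X x) hwf1 hdep1 Y y
      (T.doAssign X x s) W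
    have e2 := PreCausalTeam.doAssign_spec (T.doTeam Y y) hwf2 hdep2 X x
      (T.doAssign Y y s) W
    have ex := PreCausalTeam.doAssign_spec T hwf h3 X x s W
    have ey := PreCausalTeam.doAssign_spec T hwf h3 Y y s W
    by_cases hWX : W ∈ X
    · have hWY : W ∉ Y := Set.disjoint_left.mp hdisj hWX
      have f1 : (T.doTeam X x).fn W ((T.doTeam X x).doAssign Y y (T.doAssign X x s))
          = none := if_pos hWX
      rw [e1, if_neg hWY, f1, Option.getD_none, ex, if_pos hWX,
        e2, if_pos hWX]
      exact ⟨rfl, hx W hWX⟩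
    · by_cases hWY : W ∈ Y
      · have f2 : (T.doTeam Y y).fn W ((T.doTeam Y y).doAssign X x (T.doAssign Y y s))
            = none := if_pos hWY
        rw [e1, if_pos hWY, e2, if_neg hWX, f2, Option.getD_none, ey, if_pos hWY]
        exact ⟨rfl, hy W hWY⟩
      · rw [e1, if_neg hWY, e2, if_neg hWX]
        have f1 : (T.doTeam X x).fn W ((T.doTeam X x).doAssign Y y (T.doAssign X x s))
            = T.fn W ((T.doTeam X x).doAssign Y y (T.doAssign X x s)) := if_neg hWX
        have f2 : (T.doTeam Y y).fn W ((T.doTeam Y y).doAssign X x (T.doAssign Y y s))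
            = T.fn W ((T.doTeam Y y).doAssign X x (T.doAssign Y y s)) := if_neg hWY
        rw [f1, f2]
        have hfneq : T.fn W ((T.doTeam X x).doAssign Y y (T.doAssign X x s))
            = T.fn W ((T.doTeam Y y).doAssign X x (T.doAssign Y y s)) :=
          h3 W _ _ fun P hp => (IH P hp).1
        by_cases hWe : W ∈ T.endo
        · have hsome : (T.fn W ((T.doTeam X x).doAssign Y y (T.doAssign X x s))).isSome :=
            hpar W hWe _ fun P hp => (IH P hp).2
          obtain ⟨a, ha⟩ := Option.isSome_iff_exists.mp hsome
          rw [ha, ← hfneq, ha]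
          exact ⟨rfl, h4 W _ a ha⟩
        · rw [h2 W hWe, ← hfneq, h2 W hWe, Option.getD_none, Option.getD_none,
            ex, if_neg hWX, h2 W hWe, Option.getD_none,
            ey, if_neg hWY, h2 W hWe, Option.getD_none]
          exact ⟨rfl, h1 s hs W⟩
  have hTeq : (T.doTeam X x).doTeam Y y = (T.doTeam Y y).doTeam X x := by
    have hteam : (T.doTeam X x).doAssign Y y '' (T.doTeam X x).team
        = (T.doTeam Y y).doAssign X x '' (T.doTeam Y y).team := by
      show (T.doTeam X x).doAssign Y y '' (T.doAssign X x '' T.team)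
        = (T.doTeam Y y).doAssign X x '' (T.doAssign Y y '' T.team)
      rw [Set.image_image, Set.image_image]
      exact Set.image_congr fun s hs => funext fun W => (key s hs W).1
    show PreCausalTeam.mk _ _ _ _ _ = PreCausalTeam.mk _ _ _ _ _
    rw [PreCausalTeam.mk.injEq]
    refine ⟨hteam, ?_, ?_, rfl, ?_⟩
    · show ((T.endo \ X) \ Y) = ((T.endo \ Y) \ X)
      exact Set.diff_diff_comm
    · funext a b
      show ((T.edge a b ∧ b ∉ X) ∧ b ∉ Y) = ((T.edge a b ∧ b ∉ Y) ∧ b ∉ X)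
      apply propext; tauto
    · funext W u
      show (if W ∈ Y then none else if W ∈ X then none else T.fn W u)
        = (if W ∈ X then none else if W ∈ Y then none else T.fn W u)
      by_cases hWX : W ∈ X <;> by_cases hWY : W ∈ Y <;> simp [hWX, hWY]
  refine ⟨hTeq, fun χ => ?_⟩
  show CDForm.sat χ ((T.doTeam X x).doTeam Y y) ↔ CDForm.sat χ ((T.doTeam Y y).doTeam X x)
  rw [hTeq]
end

section
/- Splitting lemma for intervened teams: let T be a parametric recursive causal team, X ⊆ dom(T), x ∈ Ran(X). Suppose the causal team T_{X=x} has causal subteams U' and V' such that (U')⁻ ∪ (V')⁻ = (T_{X=x})⁻. Then T has causal subteams U and V such that U_{X=x} = U' and V_{X=x} = V'. -/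
open scoped Classical

/-- Splitting lemma for intervened teams: let `T` be a parametric
recursive causal team, `X ⊆ dom(T)`, `x ∈ Ran(X)`.  If the intervened team `T_{X=x}`
has causal subteams `U', V'` whose team components cover `(T_{X=x})⁻`, then `T` has
causal subteams `U, V` with `U_{X=x} = U'` and `V_{X=x} = V'`. -/
theorem intervention_splitting {V A : Type} [Fintype V]
    (T : PreCausalTeam V A)
    (hcau : T.IsCausal) (hpar : T.Parametric) (hrec : T.Recursive)
    (X : Set V) (x : V → A) (hx : ∀ v ∈ X, x v ∈ T.ran v)
    (S₁ S₂ : Set (V → A))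
    (hS₁ : S₁ ⊆ (T.doTeam X x).team) (hS₂ : S₂ ⊆ (T.doTeam X x).team)
    (hcover : S₁ ∪ S₂ = (T.doTeam X x).team) :
    ∃ U₁ U₂ : Set (V → A), U₁ ⊆ T.team ∧ U₂ ⊆ T.team ∧
      (T.withTeam U₁).doTeam X x = (T.doTeam X x).withTeam S₁ ∧
      (T.withTeam U₂).doTeam X x = (T.doTeam X x).withTeam S₂ := by
  refine ⟨{s ∈ T.team | T.doAssign X x s ∈ S₁}, {s ∈ T.team | T.doAssign X x s ∈ S₂},
    fun s hs => hs.1, fun s hs => hs.1, ?_, ?_⟩ <;>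
  · simp only [PreCausalTeam.doTeam, PreCausalTeam.withTeam]
    congr 1
    ext t
    constructor
    · rintro ⟨s, hs, rfl⟩; exact hs.2
    · intro ht
      obtain ⟨s, hs, rfl⟩ := ‹_ ⊆ (T.doTeam X x).team› ht
      exact ⟨s, ⟨hs, ‹T.doAssign X x s ∈ _›⟩, rfl⟩
end

section
/- The Markov Axiom Scheme implies the Markov Condition: let T be a finite recursive causal multiteam with nonempty T⁻. Suppose that for every variable X ∈ dom(T), writing Y for the set of ALL nondescendants of X in G(T) not belonging to PA_X, and for every tuple of values (x, pa, y) occurring in T, one has Pr_T(X=x | PA_X = pa) = Pr_T(X=x | PA_X = pa ∧ Y = y). Then for every variable X ∈ dom(T), every set N of nondescendants of X in G(T) disjoint from PA_X ∪ {X}, and every tuple of values (x, pa, n) occurring in T, one has Pr_T(X=x | PA_X = pa) = Pr_T(X=x | PA_X = pa ∧ N = n). -/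
open scoped Classical

/-- Conditional probability of the event `Sa` given the event `Sb`, in a finite causal
multiteam `T` (normalized counting). -/
noncomputable def condPr {V A : Type} (T : PreCausalTeam V A)
    (Sa Sb : Set (V → A)) : ℝ :=
  ((T.team ∩ (Sa ∩ Sb)).ncard : ℝ) / ((T.team ∩ Sb).ncard : ℝ)

/-- `W` is a nondescendant of `X`: `W ≠ X` and there is no directed path from `X`
to `W` in the graph. -/
def Nondescendant {V A : Type} (T : PreCausalTeam V A) (X W : V) : Prop :=
  W ≠ X ∧ ¬ Relation.TransGen T.edge X W

/-- The Markov Axiom Scheme implies the Markov Condition: let `T` be a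
finite recursive causal multiteam with nonempty team.  Suppose (MA) that for every
variable `X` and every tuple of values occurring in `T` (witnessed by some `s₀ ∈ T⁻`),
the probability of `X = s₀(X)` conditional on its parents taking the values `s₀(PA_X)`
is unchanged by further conditioning on ALL the nondescendants of `X` outside `PA_X`
taking their `s₀`-values.  Then for every variable `X`, every set `N` of nondescendants
of `X` disjoint from `PA_X ∪ {X}`, and every tuple of values occurring in `T`
(witnessed by some `s₀ ∈ T⁻`), the probability of `X = s₀(X)` conditional on
`PA_X = s₀(PA_X)` equals the one conditional on `PA_X = s₀(PA_X)` and `N = s₀(N)`. -/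
theorem markov_axiom_implies_markov_condition {V A : Type} [Fintype V]
    (T : PreCausalTeam V A)
    (hcau : T.IsCausal) (hrec : T.Recursive)
    (hfin : T.team.Finite) (hne : T.team.Nonempty)
    (MA : ∀ X : V, ∀ s₀ ∈ T.team,
      condPr T {s | s X = s₀ X} {s | ∀ P, T.edge P X → s P = s₀ P} =
      condPr T {s | s X = s₀ X}
        {s | (∀ P, T.edge P X → s P = s₀ P) ∧
             ∀ W, Nondescendant T X W → ¬ T.edge W X → s W = s₀ W}) :
    ∀ X : V, ∀ N : Set V,
      (∀ W ∈ N, Nondescendant T X W) →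
      (∀ W ∈ N, ¬ T.edge W X) →
      ∀ s₀ ∈ T.team,
        condPr T {s | s X = s₀ X} {s | ∀ P, T.edge P X → s P = s₀ P} =
        condPr T {s | s X = s₀ X}
          {s | (∀ P, T.edge P X → s P = s₀ P) ∧ ∀ W ∈ N, s W = s₀ W} := by
  classical
  intro X N hNnd hNpa s₀ hs₀
  set Tt : Finset (V → A) := hfin.toFinset with hTt
  have hmem : ∀ s, s ∈ Tt ↔ s ∈ T.team := fun s => hfin.mem_toFinset
  -- counting helper
  have hcard : ∀ (Fs : Finset (V → A)) (S : Set (V → A)),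
      (∀ s, s ∈ Fs ↔ s ∈ T.team ∧ s ∈ S) →
      ((T.team ∩ S).ncard : ℝ) = (Fs.card : ℝ) := by
    intro Fs S h
    have hset : T.team ∩ S = ↑Fs := by
      ext s; rw [Set.mem_inter_iff, ← h s]; simp
    rw [hset, Set.ncard_coe_finset]
  set B : Set (V → A) := {s | ∀ P, T.edge P X → s P = s₀ P} with hB
  set x := s₀ X with hx
  let Cell : (V → A) → Set (V → A) := fun t =>
    {s | (∀ P, T.edge P X → s P = t P) ∧
      ∀ W, Nondescendant T X W → ¬ T.edge W X → s W = t W}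
  -- positivity helper
  have hposn : ∀ S : Set (V → A), ∀ s ∈ T.team, s ∈ S →
      (0:ℝ) < ((T.team ∩ S).ncard : ℝ) := by
    intro S s hsT hsS
    have hnon : (T.team ∩ S).Nonempty := ⟨s, hsT, hsS⟩
    have hf : (T.team ∩ S).Finite := hfin.inter_of_left S
    exact_mod_cast (Set.ncard_pos hf).mpr hnon
  have hs₀B : s₀ ∈ B := fun P _ => rfl
  have hBpos := hposn B s₀ hs₀ hs₀B
  have hxBpos := hposn ({s | s X = x} ∩ B) s₀ hs₀ ⟨rfl, hs₀B⟩
  -- Lemma A (cross-multiplied Markov axiom for cells)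
  have lemA : ∀ s₁, s₁ ∈ B → ∀ s₂ ∈ T.team, s₂ ∈ Cell s₁ →
      ((T.team ∩ ({s | s X = s₂ X} ∩ Cell s₁)).ncard : ℝ) *
        ((T.team ∩ B).ncard : ℝ) =
      ((T.team ∩ ({s | s X = s₂ X} ∩ B)).ncard : ℝ) *
        ((T.team ∩ Cell s₁).ncard : ℝ) := by
    intro s₁ hs₁B s₂ hs₂T hs₂C
    have hE1 : {s : V → A | ∀ P, T.edge P X → s P = s₂ P} = B := by
      ext s; constructor
      · intro h P hP; rw [h P hP, hs₂C.1 P hP, hs₁B P hP]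
      · intro h P hP; rw [h P hP, ← hs₁B P hP, ← hs₂C.1 P hP]
    have hE2 : {s : V → A | (∀ P, T.edge P X → s P = s₂ P) ∧
        ∀ W, Nondescendant T X W → ¬ T.edge W X → s W = s₂ W} = Cell s₁ := by
      ext s
      constructor
      · rintro ⟨h1, h2⟩
        exact ⟨fun P hP => by rw [h1 P hP, hs₂C.1 P hP],
          fun W hW hW' => by rw [h2 W hW hW', hs₂C.2 W hW hW']⟩
      · rintro ⟨h1, h2⟩
        exact ⟨fun P hP => by rw [h1 P hP, ← hs₂C.1 P hP],
          fun W hW hW' => by rw [h2 W hW hW', ← hs₂C.2 W hW hW']⟩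
    have h := MA X s₂ hs₂T
    rw [hE1, hE2] at h
    unfold condPr at h
    have hCpos := hposn (Cell s₁) s₂ hs₂T hs₂C
    rw [div_eq_div_iff (by positivity) (by positivity)] at h
    linarith
  -- Lemma B: cell mass formula
  have lemB : ∀ s₁ ∈ T.team, s₁ ∈ B →
      ((T.team ∩ ({s | s X = x} ∩ Cell s₁)).ncard : ℝ) *
        ((T.team ∩ B).ncard : ℝ) =
      ((T.team ∩ ({s | s X = x} ∩ B)).ncard : ℝ) *
        ((T.team ∩ Cell s₁).ncard : ℝ) := by
    intro s₁ hs₁T hs₁B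
    have hs₁C : s₁ ∈ Cell s₁ := ⟨fun _ _ => rfl, fun _ _ _ => rfl⟩
    have hCpos := hposn (Cell s₁) s₁ hs₁T hs₁C
    by_cases hexist : ∃ s₂ ∈ T.team, s₂ ∈ Cell s₁ ∧ s₂ X = x
    · obtain ⟨s₂, hs₂T, hs₂C, hs₂x⟩ := hexist
      have h := lemA s₁ hs₁B s₂ hs₂T hs₂C
      rwa [hs₂x] at h
    · exfalso
      push_neg at hexist
      set Fc : Finset (V → A) := Tt.filter (· ∈ Cell s₁) with hFc
      set Vals : Finset A := Fc.image (fun s => s X) with hVals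
      have hxV : x ∉ Vals := by
        intro hxv
        rw [hVals] at hxv
        obtain ⟨s₂, hs₂, hs₂x⟩ := Finset.mem_image.mp hxv
        rw [hFc, Finset.mem_filter] at hs₂
        exact hexist s₂ ((hmem s₂).mp hs₂.1) hs₂.2 hs₂x
      set FB : Finset (V → A) := Tt.filter (· ∈ B) with hFB
      -- card identifications
      have hFcCell : ((T.team ∩ Cell s₁).ncard : ℝ) = (Fc.card : ℝ) :=
        hcard _ _ (by intro s; rw [hFc, Finset.mem_filter, hmem])
      have hFBB : ((T.team ∩ B).ncard : ℝ) = (FB.card : ℝ) :=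
        hcard _ _ (by intro s; rw [hFB, Finset.mem_filter, hmem])
      have hCcard : ∀ a : A, ((T.team ∩ ({s | s X = a} ∩ Cell s₁)).ncard : ℝ) =
          ((Fc.filter (fun s => s X = a)).card : ℝ) := by
        intro a
        refine hcard _ _ ?_
        intro s
        rw [Finset.mem_filter, hFc, Finset.mem_filter, hmem]
        simp only [Set.mem_inter_iff, Set.mem_setOf_eq]
        tauto
      have hBcard : ∀ a : A, ((T.team ∩ ({s | s X = a} ∩ B)).ncard : ℝ) =
          ((FB.filter (fun s => s X = a)).card : ℝ) := by
        intro a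
        refine hcard _ _ ?_
        intro s
        rw [Finset.mem_filter, hFB, Finset.mem_filter, hmem]
        simp only [Set.mem_inter_iff, Set.mem_setOf_eq]
        tauto
      -- sum over values in the cell
      have hsum1 : Fc.card = ∑ a ∈ Vals, (Fc.filter (fun s => s X = a)).card :=
        Finset.card_eq_sum_card_fiberwise (fun s hs => Finset.mem_image_of_mem _ hs)
      -- sum over values in B is at most |B|
      have hsum2 : ∑ a ∈ insert x Vals, (FB.filter (fun s => s X = a)).card ≤ FB.card := by
        have key : ∀ a ∈ insert x Vals,
            FB.filter (fun s => s X = a)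
              = (FB.filter (fun s => s X ∈ insert x Vals)).filter (fun s => s X = a) := by
          intro a ha; ext s
          simp only [Finset.mem_filter]
          constructor
          · rintro ⟨h1, h2⟩; exact ⟨⟨h1, h2 ▸ ha⟩, h2⟩
          · rintro ⟨⟨h1, _⟩, h2⟩; exact ⟨h1, h2⟩
        calc ∑ a ∈ insert x Vals, (FB.filter (fun s => s X = a)).card
            = ∑ a ∈ insert x Vals,
              ((FB.filter (fun s => s X ∈ insert x Vals)).filter (fun s => s X = a)).card :=
              Finset.sum_congr rfl (fun a ha => by rw [key a ha])
          _ = (FB.filter (fun s => s X ∈ insert x Vals)).card :=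
              (Finset.card_eq_sum_card_fiberwise
                (fun s hs => (Finset.mem_filter.mp hs).2)).symm
          _ ≤ FB.card := Finset.card_filter_le _ _
      -- per-value equations from lemA
      have hval : ∀ a ∈ Vals,
          (((Fc.filter (fun s => s X = a)).card : ℝ)) * ((T.team ∩ B).ncard : ℝ) =
          ((FB.filter (fun s => s X = a)).card : ℝ) * ((T.team ∩ Cell s₁).ncard : ℝ) := by
        intro a ha
        rw [hVals] at ha
        obtain ⟨s₂, hs₂, hs₂x⟩ := Finset.mem_image.mp ha
        rw [hFc, Finset.mem_filter] at hs₂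
        have hs₂x' : s₂ X = a := hs₂x
        have h := lemA s₁ hs₁B s₂ ((hmem s₂).mp hs₂.1) hs₂.2
        rw [hs₂x', hCcard a, hBcard a] at h
        exact h
      -- summing hval
      have hsumval : ((Fc.card : ℝ)) * ((T.team ∩ B).ncard : ℝ) =
          (∑ a ∈ Vals, ((FB.filter (fun s => s X = a)).card : ℝ)) *
            ((T.team ∩ Cell s₁).ncard : ℝ) := by
        rw [hsum1]
        push_cast
        rw [Finset.sum_mul, Finset.sum_mul]
        exact Finset.sum_congr rfl hval
      have hsum2' : (∑ a ∈ Vals, ((FB.filter (fun s => s X = a)).card : ℝ)) +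
          ((FB.filter (fun s => s X = x)).card : ℝ) ≤ (FB.card : ℝ) := by
        have h := hsum2
        rw [Finset.sum_insert hxV] at h
        have h2 := (Nat.cast_le (α := ℝ)).mpr h
        push_cast at h2
        linarith
      have hFcpos : (0:ℝ) < (Fc.card : ℝ) := by rw [← hFcCell]; exact hCpos
      have hsv : (∑ a ∈ Vals, ((FB.filter (fun s => s X = a)).card : ℝ)) = (FB.card : ℝ) := by
        rw [hFBB, hFcCell] at hsumval
        have h1 : (Fc.card : ℝ) * (FB.card : ℝ) =
            (∑ a ∈ Vals, ((FB.filter (fun s => s X = a)).card : ℝ)) * (Fc.card : ℝ) :=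
          hsumval
        field_simp at h1
        nlinarith [h1, hFcpos]
      have hxb := hxBpos
      rw [hBcard x] at hxb
      rw [hFBB] at hBpos
      linarith
  -- Final assembly: partition the N-conditioned event into cells
  set C : Set (V → A) :=
    {s | (∀ P, T.edge P X → s P = s₀ P) ∧ ∀ W ∈ N, s W = s₀ W} with hC
  have hs₀C : s₀ ∈ C := ⟨fun _ _ => rfl, fun _ _ => rfl⟩
  have hCpos := hposn C s₀ hs₀ hs₀C
  set F : Finset (V → A) := Tt.filter (· ∈ C) with hF
  let κ : (V → A) → (V → A) := fun s W =>
    if Nondescendant T X W ∧ ¬ T.edge W X then s W else s₀ W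
  set Keys : Finset (V → A) := F.image κ with hKeys
  set F' : Finset (V → A) := F.filter (fun s => s X = x) with hF'
  have hsumF : F.card = ∑ k ∈ Keys, (F.filter (fun s => κ s = k)).card :=
    Finset.card_eq_sum_card_fiberwise (fun s hs => Finset.mem_image_of_mem _ hs)
  have hsumF' : F'.card = ∑ k ∈ Keys, (F'.filter (fun s => κ s = k)).card :=
    Finset.card_eq_sum_card_fiberwise
      (fun s hs => Finset.mem_image_of_mem _ (Finset.mem_filter.mp hs).1)
  -- per-key identification and equation
  have hkey : ∀ k ∈ Keys,
      ((F'.filter (fun s => κ s = k)).card : ℝ) * ((T.team ∩ B).ncard : ℝ) =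
      ((T.team ∩ ({s | s X = x} ∩ B)).ncard : ℝ) *
        ((F.filter (fun s => κ s = k)).card : ℝ) := by
    intro k hk
    obtain ⟨s₁, hs₁F, hs₁k⟩ := Finset.mem_image.mp hk
    have hs₁F2 := Finset.mem_filter.mp hs₁F
    have hs₁T : s₁ ∈ T.team := (hmem s₁).mp hs₁F2.1
    have hs₁C : s₁ ∈ C := hs₁F2.2
    have hs₁B : s₁ ∈ B := fun P hP => hs₁C.1 P hP
    -- fiber membership characterizations
    have hFkmem : ∀ s, s ∈ F.filter (fun s => κ s = k) ↔ s ∈ T.team ∧ s ∈ Cell s₁ := by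
      intro s
      rw [Finset.mem_filter, hF, Finset.mem_filter, hmem]
      constructor
      · rintro ⟨⟨hsT, hsC⟩, hsk⟩
        refine ⟨hsT, ?_, ?_⟩
        · intro P hP; rw [hsC.1 P hP, ← hs₁C.1 P hP]
        · intro W hW hW'
          have hcf := congrFun (hsk.trans hs₁k.symm) W
          simpa only [κ, if_pos (And.intro hW hW')] using hcf
      · rintro ⟨hsT, hsCell⟩
        refine ⟨⟨hsT, ?_, ?_⟩, ?_⟩
        · intro P hP; rw [hsCell.1 P hP, hs₁C.1 P hP]
        · intro W hWN
          rw [hsCell.2 W (hNnd W hWN) (hNpa W hWN), hs₁C.2 W hWN]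
        · rw [← hs₁k]
          funext W
          by_cases hW : Nondescendant T X W ∧ ¬ T.edge W X
          · simp only [κ, if_pos hW]; exact hsCell.2 W hW.1 hW.2
          · simp only [κ, if_neg hW]
    have e1 : ((T.team ∩ Cell s₁).ncard : ℝ) =
        ((F.filter (fun s => κ s = k)).card : ℝ) :=
      hcard _ _ (fun s => hFkmem s)
    have e2 : ((T.team ∩ ({s | s X = x} ∩ Cell s₁)).ncard : ℝ) =
        ((F'.filter (fun s => κ s = k)).card : ℝ) := by
      refine hcard _ _ ?_
      intro s
      rw [Finset.mem_filter, hF', Finset.mem_filter]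
      constructor
      · rintro ⟨⟨hsF, hsx⟩, hsk⟩
        have hm := (hFkmem s).mp (Finset.mem_filter.mpr ⟨hsF, hsk⟩)
        exact ⟨hm.1, hsx, hm.2⟩
      · rintro ⟨hsT, hsx, hsCell⟩
        have hm := Finset.mem_filter.mp ((hFkmem s).mpr ⟨hsT, hsCell⟩)
        exact ⟨⟨hm.1, hsx⟩, hm.2⟩
    have h := lemB s₁ hs₁T hs₁B
    rw [e1, e2] at h
    exact h
  -- sum the per-key equations
  have hmain : ((F'.card : ℝ)) * ((T.team ∩ B).ncard : ℝ) =
      ((T.team ∩ ({s | s X = x} ∩ B)).ncard : ℝ) * ((F.card : ℝ)) := by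
    rw [hsumF, hsumF']
    push_cast
    rw [Finset.sum_mul, Finset.mul_sum]
    exact Finset.sum_congr rfl hkey
  have hF'C : ((T.team ∩ ({s | s X = x} ∩ C)).ncard : ℝ) = (F'.card : ℝ) := by
    refine hcard _ _ ?_
    intro s
    rw [hF', Finset.mem_filter, hF, Finset.mem_filter, hmem]
    simp only [Set.mem_inter_iff, Set.mem_setOf_eq]
    tauto
  have hFC : ((T.team ∩ C).ncard : ℝ) = (F.card : ℝ) :=
    hcard _ _ (by intro s; rw [hF, Finset.mem_filter, hmem])
  unfold condPr
  rw [div_eq_div_iff (by positivity) (by positivity)]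
  rw [hF'C, hFC]
  linarith [hmain]
end
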